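/- arXiv:1711.09443 — 2 statements merged into one kernel-verified Lean document; each statement's English description precedes it below -/
import Mathlib

section
/- Let Π_0 = {ε_1 - ε_2, …, ε_{n-1} - ε_n, ε_n - ε_1 + δ} with the bilinear form extended by (δ, ε_i) = (δ, δ) = 0. Then for every odd root β = ε_i + mδ or β = -ε_i + mδ (m ∈ ℤ), there exists exactly one α ∈ Π_0 with (α, β) = -1 and exactly one α' ∈ Π_0 with (β, α') = 1. -/
/-!
On the `ε`-coordinates the form is `B u v = u ⬝ᵥ v - (∑ u) (∑ v)`, and every root in `Π₀` has
coordinate sum zero, so `B (π k) (±ε i + m δ) = ±(δ_{ik} - δ_{i,k+1})` with `k + 1` taken mod `n`,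
and `B` is symmetric. For `n ≥ 2` the cyclic shift `k ↦ k + 1` has no fixed point, so the value `±1`
is attained exactly at `k = i` and the value `∓1` exactly at the predecessor of `i`.
-/

open Matrix

theorem Fin.mk_add_one_mod_eq_finRotate {n : ℕ} (k : Fin n) (h : ((k : ℕ) + 1) % n < n) :
    (⟨((k : ℕ) + 1) % n, h⟩ : Fin n) = finRotate n k := by
  have := k.neZero
  ext
  rw [finRotate_apply, Fin.val_add, Fin.val_one', Nat.add_mod_mod]

theorem sum_sum_ite_eq_neg_mul {ι R : Type*} [Fintype ι] [DecidableEq ι] [CommRing R]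
    (u v : ι → R) :
    ∑ i, ∑ j, (if i = j then 0 else -(u i * v j)) = u ⬝ᵥ v - (∑ i, u i) * ∑ j, v j := by
  calc ∑ i, ∑ j, (if i = j then 0 else -(u i * v j))
      = ∑ i, ∑ j, ((if i = j then u i * v j else 0) - u i * v j) := by
        congr! 2 with i - j -
        split_ifs <;> ring
    _ = u ⬝ᵥ v - (∑ i, u i) * ∑ j, v j := by
        simp [Finset.sum_sub_distrib, Finset.sum_mul_sum, dotProduct]

theorem existsUnique_ite_sub_ite_eq {ι R : Type*} [DecidableEq ι] [Ring R] [NoZeroDivisors R]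
    [CharZero R] {σ : Equiv.Perm ι} (hσ : ∀ k, σ k ≠ k) (i : ι) {c : R} (hc : c ≠ 0) :
    (∃! k, (if i = k then c else 0) - (if i = σ k then c else 0) = c) ∧
      ∃! k, (if i = k then c else 0) - (if i = σ k then c else 0) = -c := by
  have hc' : c ≠ -c := fun h => hc (CharZero.eq_neg_self_iff.mp h)
  have hval : ∀ k, ((if i = k then c else 0) - (if i = σ k then c else 0) = c ↔ i = k) ∧
      ((if i = k then c else 0) - (if i = σ k then c else 0) = -c ↔ σ k = i) := by
    intro k
    by_cases hk : i = k
    · subst hk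
      simp [hσ i, (hσ i).symm, hc']
    · by_cases hσk : i = σ k
      · subst hσk
        simp [hσ k, hc'.symm]
      · simp [hk, hσk, Ne.symm hσk, hc, hc.symm]
  exact ⟨by simpa only [(hval _).1] using existsUnique_eq',
    by simpa only [(hval _).2] using σ.bijective.existsUnique i⟩

/-- Affine root data for `sl(1|n)^{(1)}`: vectors are pairs `(x, a)` representing
`x + a·δ`, where `δ` is orthogonal to everything.  For
`Π₀ = {ε_1 - ε_2, …, ε_{n-1} - ε_n, ε_n - ε_1 + δ}` and any odd root
`β = ±ε_i + mδ`, there is exactly one `α ∈ Π₀` with `(α, β) = -1` and exactly one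
`α' ∈ Π₀` with `(β, α') = 1`. -/
theorem stmt_2 (n : ℕ) (hn : 2 ≤ n)
    (B : ((Fin n → ℝ) × ℝ) → ((Fin n → ℝ) × ℝ) → ℝ)
    (hB : ∀ u v, B u v = ∑ i, ∑ j, if i = j then 0 else -(u.1 i * v.1 j))
    (ε : Fin n → ((Fin n → ℝ) × ℝ)) (hε : ∀ i, ε i = (Pi.single i 1, 0))
    (δv : (Fin n → ℝ) × ℝ) (hδ : δv = (0, 1))
    (π : Fin n → ((Fin n → ℝ) × ℝ))
    (hπ : ∀ k : Fin n, π k = ε k - ε ⟨((k : ℕ) + 1) % n, Nat.mod_lt _ (by omega)⟩ +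
        (if (k : ℕ) = n - 1 then δv else 0)) :
    ∀ (i : Fin n) (m : ℤ) (β : (Fin n → ℝ) × ℝ),
      (β = ε i + (m : ℝ) • δv ∨ β = -(ε i) + (m : ℝ) • δv) →
      (∃! k : Fin n, B (π k) β = -1) ∧ (∃! k' : Fin n, B β (π k') = 1) := by
  intro i m β hβ
  have hσ : ∀ k, finRotate n k ≠ k := fun k =>
    Equiv.Perm.mem_support.mp (by simp [support_finRotate_of_le hn])
  have hπ₁ : ∀ k, (π k).1 = Pi.single k 1 - Pi.single (finRotate n k) 1 := by
    intro k
    rw [hπ k, Fin.mk_add_one_mod_eq_finRotate]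
    split_ifs <;> simp [hε, hδ]
  set σ := finRotate n
  clear_value σ
  obtain ⟨c, hc, hβ₁⟩ : ∃ c : ℝ, (c = 1 ∨ c = -1) ∧ β.1 = Pi.single i c := by
    rcases hβ with rfl | rfl
    · exact ⟨1, .inl rfl, by simp [hε, hδ]⟩
    · exact ⟨-1, .inr rfl, by simp [hε, hδ, Pi.single_neg]⟩
  have hB' : ∀ u v, B u v = u.1 ⬝ᵥ v.1 - (∑ p, u.1 p) * ∑ q, v.1 q := fun u v =>
    (hB u v).trans (sum_sum_ite_eq_neg_mul _ _)
  have hsum : ∀ k, ∑ p, (π k).1 p = 0 := fun k => by simp [hπ₁, Finset.sum_sub_distrib]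
  have hdot : ∀ k, (π k).1 ⬝ᵥ β.1 = (if i = k then c else 0) - (if i = σ k then c else 0) := by
    intro k
    simp [hπ₁, hβ₁, dotProduct_single, Pi.single_apply, sub_mul, ite_mul]
  obtain ⟨hpos, hneg⟩ := existsUnique_ite_sub_ite_eq hσ i (c := c)
    (by rcases hc with rfl | rfl <;> norm_num)
  simp only [hB', hsum, zero_mul, mul_zero, sub_zero, dotProduct_comm β.1, hdot]
  rcases hc with rfl | rfl
  · exact ⟨hneg, hpos⟩
  · exact ⟨hpos, by rwa [neg_neg] at hneg⟩
end

section
/- Let g be a Lie superalgebra, x ∈ g_{1̄} with [x,x] = 0, and let N_1, N_2 be g-modules. Then the canonical map Ker_{N_1}(x) ⊗ Ker_{N_2}(x) → N_1 ⊗ N_2 induces an isomorphism F_x(N_1) ⊗ F_x(N_2) ≅ F_x(N_1 ⊗ N_2), where x acts on N_1 ⊗ N_2 by the super-Leibniz rule. -/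
/-! Over a field every square-zero `X` has a homotopy retraction: maps `p, h` with
`X p = p X = 0` and `X h + h X = 1 - p` (take `h = g` for a generalized inverse, `X g X = X`),
so `π : v ↦ [p v]` kills `Im X` and agrees with `v ↦ [v]` on `Ker X`. For retractions
`(p₁, h₁)`, `(p₂, h₂)` of `X₁`, `X₂`, the map `σ ⊗ h₂ + h₁ ⊗ p₂` is a homotopy from `1` to
`p₁ ⊗ p₂` for `X₁ ⊗ 1 + σ ⊗ X₂`: the twisted terms cancel because `σ² = 1` and
`σ X₁ = -X₁ σ`. Hence `π₁ ⊗ π₂` descends to an inverse of the canonical map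
`[v] ⊗ [w] ↦ [v ⊗ w]`. -/

open TensorProduct

/-- The Duflo–Serganova space `F_x(N) = Ker_N x / Im_N x` of an odd square-zero
operator. -/
def DS {K M : Type*} [Field K] [AddCommGroup M] [Module K M] (X : M →ₗ[K] M) :=
  LinearMap.ker X ⧸ (LinearMap.range X).comap (LinearMap.ker X).subtype

noncomputable instance {K M : Type*} [Field K] [AddCommGroup M] [Module K M]
    (X : M →ₗ[K] M) : AddCommGroup (DS X) :=
  Submodule.Quotient.addCommGroup _

noncomputable instance {K M : Type*} [Field K] [AddCommGroup M] [Module K M]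
    (X : M →ₗ[K] M) : Module K (DS X) :=
  Submodule.Quotient.module _

open LinearMap

section Retraction

variable {K V : Type*} [Field K] [AddCommGroup V] [Module K V]

theorem LinearMap.exists_comp_comp_eq_self (X : V →ₗ[K] V) :
    ∃ g : V →ₗ[K] V, X ∘ₗ g ∘ₗ X = X := by
  obtain ⟨s, hs⟩ := X.rangeRestrict.exists_rightInverse_of_surjective X.range_rangeRestrict
  obtain ⟨r, hr⟩ := (range X).subtype.exists_leftInverse_of_injective (range X).ker_subtype
  refine ⟨s ∘ₗ r, ?_⟩
  calc X ∘ₗ (s ∘ₗ r) ∘ₗ X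
      = (range X).subtype ∘ₗ (X.rangeRestrict ∘ₗ s) ∘ₗ (r ∘ₗ (range X).subtype) ∘ₗ
          X.rangeRestrict := rfl
    _ = X := by rw [hs, hr]; rfl

structure IsHomotopyRetraction (X p h : V →ₗ[K] V) : Prop where
  comp_proj : X ∘ₗ p = 0
  proj_comp : p ∘ₗ X = 0
  homotopy : X ∘ₗ h + h ∘ₗ X = LinearMap.id - p

theorem exists_isHomotopyRetraction {X : V →ₗ[K] V} (hX : X ∘ₗ X = 0) :
    ∃ p h, IsHomotopyRetraction X p h := by
  obtain ⟨g, hg⟩ := X.exists_comp_comp_eq_self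
  refine ⟨LinearMap.id - X ∘ₗ g - g ∘ₗ X, g, ⟨?_, ?_, by abel⟩⟩
  · rw [comp_sub, comp_sub, ← comp_assoc, hX, hg]; simp
  · rw [sub_comp, sub_comp, comp_assoc, hg, comp_assoc, hX]; simp

namespace IsHomotopyRetraction

variable {X p h : V →ₗ[K] V}

theorem apply_proj (H : IsHomotopyRetraction X p h) (v : V) : X (p v) = 0 :=
  congr($H.comp_proj v)

theorem proj_apply (H : IsHomotopyRetraction X p h) (v : V) : p (X v) = 0 :=
  congr($H.proj_comp v)

theorem homotopy_apply (H : IsHomotopyRetraction X p h) (v : V) :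
    X (h v) + h (X v) = v - p v :=
  congr($H.homotopy v)

theorem sub_proj_mem_range (H : IsHomotopyRetraction X p h) {v : V} (hv : X v = 0) :
    v - p v ∈ range X :=
  ⟨h v, by simpa [hv] using H.homotopy_apply v⟩

noncomputable def toDS (H : IsHomotopyRetraction X p h) : V →ₗ[K] DS X :=
  Submodule.mkQ _ ∘ₗ p.codRestrict (ker X) H.apply_proj

theorem toDS_apply (H : IsHomotopyRetraction X p h) (v : V) :
    H.toDS v = Submodule.Quotient.mk ⟨p v, mem_ker.mpr (H.apply_proj v)⟩ :=
  rfl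

theorem toDS_comp_apply (H : IsHomotopyRetraction X p h) (v : V) : H.toDS (X v) = 0 := by
  have : (⟨p (X v), mem_ker.mpr (H.apply_proj (X v))⟩ : ker X) = 0 :=
    Subtype.ext (H.proj_apply v)
  rw [toDS_apply, this]
  rfl

theorem toDS_of_mem_ker (H : IsHomotopyRetraction X p h) {v : V} (hv : v ∈ ker X) :
    H.toDS v = Submodule.Quotient.mk ⟨v, hv⟩ := by
  rw [H.toDS_apply]
  exact (Submodule.Quotient.eq _).mpr (by simpa using neg_mem (H.sub_proj_mem_range hv))

end IsHomotopyRetraction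

end Retraction

section SuperTensor

variable {K N₁ N₂ : Type*} [Field K] [AddCommGroup N₁] [Module K N₁]
  [AddCommGroup N₂] [Module K N₂]

/-- `σ` plays the role of the parity operator `v ↦ (-1)^|v| v` of `N₁`. -/
def superTensor (X₁ σ : N₁ →ₗ[K] N₁) (X₂ : N₂ →ₗ[K] N₂) : N₁ ⊗[K] N₂ →ₗ[K] N₁ ⊗[K] N₂ :=
  map X₁ LinearMap.id + map σ X₂

variable {X₁ σ : N₁ →ₗ[K] N₁} {X₂ : N₂ →ₗ[K] N₂}

@[simp]
theorem superTensor_tmul (v : N₁) (w : N₂) :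
    superTensor X₁ σ X₂ (v ⊗ₜ w) = X₁ v ⊗ₜ w + σ v ⊗ₜ X₂ w := by
  simp [superTensor]

theorem tmul_mem_ker_superTensor {v : N₁} {w : N₂} (hv : v ∈ ker X₁) (hw : w ∈ ker X₂) :
    v ⊗ₜ w ∈ ker (superTensor X₁ σ X₂) := by
  simp_all

theorem tmul_mem_range_superTensor_of_mem_range_left {v : N₁} {w : N₂} (hv : v ∈ range X₁)
    (hw : w ∈ ker X₂) : v ⊗ₜ w ∈ range (superTensor X₁ σ X₂) := by
  obtain ⟨u, rfl⟩ := hv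
  exact ⟨u ⊗ₜ w, by simp_all⟩

theorem tmul_mem_range_superTensor_of_mem_range_right (hσ : σ ∘ₗ σ = LinearMap.id)
    (hσX : σ ∘ₗ X₁ = -(X₁ ∘ₗ σ)) {v : N₁} {w : N₂} (hv : v ∈ ker X₁) (hw : w ∈ range X₂) :
    v ⊗ₜ w ∈ range (superTensor X₁ σ X₂) := by
  obtain ⟨u, rfl⟩ := hw
  have hXσv : X₁ (σ v) = 0 := by simpa [mem_ker.mp hv] using congr($hσX v).symm
  refine ⟨σ v ⊗ₜ u, ?_⟩
  rw [superTensor_tmul, hXσv, zero_tmul, zero_add, ← comp_apply σ σ, hσ, id_apply]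

theorem IsHomotopyRetraction.superTensor (hσ : σ ∘ₗ σ = LinearMap.id)
    (hσX : σ ∘ₗ X₁ = -(X₁ ∘ₗ σ)) {p₁ h₁ : N₁ →ₗ[K] N₁} {p₂ h₂ : N₂ →ₗ[K] N₂}
    (H₁ : IsHomotopyRetraction X₁ p₁ h₁) (H₂ : IsHomotopyRetraction X₂ p₂ h₂) :
    IsHomotopyRetraction (superTensor X₁ σ X₂) (map p₁ p₂) (map σ h₂ + map h₁ p₂) := by
  refine ⟨TensorProduct.ext' fun v w => ?_, TensorProduct.ext' fun v w => ?_,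
    TensorProduct.ext' fun v w => ?_⟩
  · simp [H₁.apply_proj, H₂.apply_proj]
  · simp [H₁.proj_apply, H₂.proj_apply]
  · have hσσ : σ (σ v) = v := congr($hσ v)
    have hσX₁ : σ (X₁ v) = -X₁ (σ v) := congr($hσX v)
    have hX₁h₁ : X₁ (h₁ v) = v - p₁ v - h₁ (X₁ v) := by
      rw [← H₁.homotopy_apply]; abel
    have hX₂h₂ : X₂ (h₂ w) = w - p₂ w - h₂ (X₂ w) := by
      rw [← H₂.homotopy_apply]; abel
    simp only [LinearMap.add_apply, comp_apply, LinearMap.sub_apply, id_apply, map_add,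
      map_tmul, superTensor_tmul, hσσ, hσX₁, hX₁h₁, hX₂h₂, H₂.apply_proj, H₂.proj_apply,
      tmul_zero, neg_tmul, sub_tmul, tmul_sub]
    abel

theorem range_map_subtype_le_ker_superTensor :
    range (map (ker X₁).subtype (ker X₂).subtype) ≤ ker (superTensor X₁ σ X₂) :=
  range_le_ker_iff.mpr <| TensorProduct.ext' fun v w => by
    simp [mem_ker.mp v.2, mem_ker.mp w.2]

namespace DS

noncomputable def tensorMap (hσ : σ ∘ₗ σ = LinearMap.id) (hσX : σ ∘ₗ X₁ = -(X₁ ∘ₗ σ)) :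
    DS X₁ ⊗[K] DS X₂ →ₗ[K] DS (superTensor X₁ σ X₂) :=
  let F : ker X₁ ⊗[K] ker X₂ →ₗ[K] DS (superTensor X₁ σ X₂) :=
    Submodule.mkQ _ ∘ₗ (map (ker X₁).subtype (ker X₂).subtype).codRestrict _
      fun z => range_map_subtype_le_ker_superTensor ⟨z, rfl⟩
  lift <| LinearMap.liftQ₂ _ _ ((TensorProduct.mk K _ _).compr₂ F)
    (fun _ hv => LinearMap.ext fun w => (Submodule.Quotient.mk_eq_zero _).mpr <|
      tmul_mem_range_superTensor_of_mem_range_left hv w.2)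
    (fun _ hw => LinearMap.ext fun v => (Submodule.Quotient.mk_eq_zero _).mpr <|
      tmul_mem_range_superTensor_of_mem_range_right hσ hσX v.2 hw)

theorem tensorMap_mk_tmul_mk (hσ : σ ∘ₗ σ = LinearMap.id) (hσX : σ ∘ₗ X₁ = -(X₁ ∘ₗ σ))
    {v : N₁} {w : N₂} (hv : v ∈ ker X₁) (hw : w ∈ ker X₂) :
    tensorMap hσ hσX (Submodule.Quotient.mk (⟨v, hv⟩ : ker X₁) ⊗ₜ
        Submodule.Quotient.mk (⟨w, hw⟩ : ker X₂)) =
      Submodule.Quotient.mk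
        (⟨v ⊗ₜ w, tmul_mem_ker_superTensor hv hw⟩ : ker (superTensor X₁ σ X₂)) :=
  rfl

variable {p₁ h₁ : N₁ →ₗ[K] N₁} {p₂ h₂ : N₂ →ₗ[K] N₂}

theorem map_toDS_comp_superTensor (H₁ : IsHomotopyRetraction X₁ p₁ h₁)
    (H₂ : IsHomotopyRetraction X₂ p₂ h₂) :
    map H₁.toDS H₂.toDS ∘ₗ superTensor X₁ σ X₂ = 0 :=
  TensorProduct.ext' fun v w => by simp [H₁.toDS_comp_apply, H₂.toDS_comp_apply]

theorem tensorMap_comp_map_toDS (hσ : σ ∘ₗ σ = LinearMap.id) (hσX : σ ∘ₗ X₁ = -(X₁ ∘ₗ σ))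
    (H₁ : IsHomotopyRetraction X₁ p₁ h₁) (H₂ : IsHomotopyRetraction X₂ p₂ h₂) :
    tensorMap hσ hσX ∘ₗ map H₁.toDS H₂.toDS = (H₁.superTensor hσ hσX H₂).toDS :=
  TensorProduct.ext' fun _ _ => rfl

noncomputable def tensorEquiv (hσ : σ ∘ₗ σ = LinearMap.id) (hσX : σ ∘ₗ X₁ = -(X₁ ∘ₗ σ))
    (H₁ : IsHomotopyRetraction X₁ p₁ h₁) (H₂ : IsHomotopyRetraction X₂ p₂ h₂) :
    (DS X₁ ⊗[K] DS X₂) ≃ₗ[K] DS (superTensor X₁ σ X₂) :=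
  .ofLinearMap (tensorMap hσ hσX)
    (Submodule.liftQ _ (map H₁.toDS H₂.toDS ∘ₗ (ker _).subtype) fun _ ⟨u, hu⟩ =>
      mem_ker.mpr <| by
        rw [comp_apply, ← hu, ← comp_apply, map_toDS_comp_superTensor H₁ H₂]
        rfl)
    (by
      apply Submodule.linearMap_qext
      ext ⟨z, hz⟩
      change tensorMap hσ hσX (map H₁.toDS H₂.toDS z) = Submodule.Quotient.mk ⟨z, hz⟩
      rw [← comp_apply, tensorMap_comp_map_toDS, IsHomotopyRetraction.toDS_of_mem_ker])
    (by
      apply TensorProduct.ext'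
      intro a b
      obtain ⟨⟨v, hv⟩, rfl⟩ := Submodule.Quotient.mk_surjective _ a
      obtain ⟨⟨w, hw⟩, rfl⟩ := Submodule.Quotient.mk_surjective _ b
      change map H₁.toDS H₂.toDS (v ⊗ₜ w) = _
      rw [map_tmul, H₁.toDS_of_mem_ker hv, H₂.toDS_of_mem_ker hw]
      rfl)

end DS

end SuperTensor

/-- Tensor property of the Duflo–Serganova functor: for square-zero odd operators
`X₁, X₂` on `N₁, N₂` (with parity operator `σ` on `N₁`), the operator
`X = X₁ ⊗ 1 + σ ⊗ X₂` given by the super-Leibniz rule satisfies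
`F_x(N₁) ⊗ F_x(N₂) ≅ F_x(N₁ ⊗ N₂)` via the canonical map
`Ker X₁ ⊗ Ker X₂ → N₁ ⊗ N₂`. -/
theorem stmt_9 (K N₁ N₂ : Type) [Field K]
    [AddCommGroup N₁] [Module K N₁] [AddCommGroup N₂] [Module K N₂]
    (X₁ : N₁ →ₗ[K] N₁) (X₂ : N₂ →ₗ[K] N₂) (σ : N₁ →ₗ[K] N₁)
    (h1 : X₁ ∘ₗ X₁ = 0) (h2 : X₂ ∘ₗ X₂ = 0) (hσ : σ ∘ₗ σ = LinearMap.id)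
    (hσX : σ ∘ₗ X₁ = -(X₁ ∘ₗ σ))
    (X : N₁ ⊗[K] N₂ →ₗ[K] N₁ ⊗[K] N₂)
    (hX : X = TensorProduct.map X₁ LinearMap.id + TensorProduct.map σ X₂) :
    ∃ Φ : (DS X₁ ⊗[K] DS X₂) ≃ₗ[K] DS X,
      ∀ (v : N₁) (w : N₂) (hv : v ∈ LinearMap.ker X₁) (hw : w ∈ LinearMap.ker X₂)
        (hvw : v ⊗ₜ[K] w ∈ LinearMap.ker X),
        Φ (Submodule.Quotient.mk (⟨v, hv⟩ : LinearMap.ker X₁) ⊗ₜ[K]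
            Submodule.Quotient.mk (⟨w, hw⟩ : LinearMap.ker X₂)) =
          Submodule.Quotient.mk (⟨v ⊗ₜ[K] w, hvw⟩ : LinearMap.ker X) := by
  obtain ⟨p₁, h₁, H₁⟩ := exists_isHomotopyRetraction h1
  obtain ⟨p₂, h₂, H₂⟩ := exists_isHomotopyRetraction h2
  subst hX
  exact ⟨DS.tensorEquiv hσ hσX H₁ H₂, fun v w hv hw _ => DS.tensorMap_mk_tmul_mk hσ hσX hv hw⟩
end
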